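/- arXiv:1409.0246 — 5 statements merged into one kernel-verified Lean document; each statement's English description precedes it below -/
import Mathlib

section
/- There exist unit 3-vectors a, a', b, b' and a function F(a,b) = cos α cos β + ξ sin α sin β (with a ↦ α, b ↦ β parametrizations, ξ > 0) such that |F(a,b) − F(a,b')| + |F(a',b) + F(a',b')| > 2. Specifically, choosing α = 0, α' = π/2, cos β = −cos β' = η, sin β = sin β' = √(1−η²), the expression equals 2(η + ξ√(1−η²)), which exceeds 2 for suitable η ∈ (0,1) whenever ξ > 0. -/
open Real

/-!
With `α = 0` the two correlations are `cos β = η` and `cos β' = -η`; with `α' = π/2` they are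
`ξ sin β = ξ sin β' = ξ √(1 - η²)`. So the CHSH expression is `2(|η| + |ξ| √(1 - η²))`, whose
maximum over `η` is attained at `η = 1/√(1 + ξ²)` (Cauchy–Schwarz for `(1, ξ)·(η, √(1-η²))`),
where it equals `2√(1 + ξ²) > 2`.
-/

theorem chsh_expression_arccos (ξ : ℝ) {η : ℝ} (hη₁ : -1 ≤ η) (hη₂ : η ≤ 1) :
    let F : ℝ → ℝ → ℝ := fun α β => cos α * cos β + ξ * sin α * sin β
    |F 0 (arccos η) - F 0 (arccos (-η))| + |F (π / 2) (arccos η) + F (π / 2) (arccos (-η))|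
      = 2 * (|η| + |ξ| * √(1 - η ^ 2)) := by
  have hcos : cos (arccos η) - cos (arccos (-η)) = 2 * η := by
    rw [cos_arccos hη₁ hη₂, cos_arccos (by linarith) (by linarith)]
    ring
  have hsin : ξ * sin (arccos η) + ξ * sin (arccos (-η)) = 2 * (ξ * √(1 - η ^ 2)) := by
    rw [sin_arccos, sin_arccos, neg_sq]
    ring
  simp only [cos_zero, sin_zero, cos_pi_div_two, sin_pi_div_two, one_mul, mul_one, zero_mul,
    mul_zero, add_zero, zero_add]
  rw [hcos, hsin, abs_mul, abs_mul, abs_mul, abs_two, abs_of_nonneg (sqrt_nonneg _)]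
  ring

theorem sqrt_one_sub_inv_sqrt_one_add_sq_sq {ξ : ℝ} (hξ : 0 ≤ ξ) :
    √(1 - (√(1 + ξ ^ 2))⁻¹ ^ 2) = ξ / √(1 + ξ ^ 2) := by
  have hsq : √(1 + ξ ^ 2) ^ 2 = 1 + ξ ^ 2 := sq_sqrt (by positivity)
  have hpos : 0 < √(1 + ξ ^ 2) := sqrt_pos.mpr (by positivity)
  have : 1 - (√(1 + ξ ^ 2))⁻¹ ^ 2 = (ξ / √(1 + ξ ^ 2)) ^ 2 := by
    field_simp
    linarith
  rw [this, sqrt_sq (by positivity)]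

theorem inv_sqrt_add_mul_sqrt_one_sub_sq {ξ : ℝ} (hξ : 0 ≤ ξ) :
    (√(1 + ξ ^ 2))⁻¹ + ξ * √(1 - (√(1 + ξ ^ 2))⁻¹ ^ 2) = √(1 + ξ ^ 2) := by
  have hsq : √(1 + ξ ^ 2) ^ 2 = 1 + ξ ^ 2 := sq_sqrt (by positivity)
  have hpos : 0 < √(1 + ξ ^ 2) := sqrt_pos.mpr (by positivity)
  rw [sqrt_one_sub_inv_sqrt_one_add_sq_sq hξ]
  field_simp
  linarith

theorem one_lt_sqrt_one_add_sq {ξ : ℝ} (hξ : ξ ≠ 0) : 1 < √(1 + ξ ^ 2) := by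
  rw [lt_sqrt zero_le_one]
  have := pow_pos (abs_pos.mpr hξ) 2
  rw [sq_abs] at this
  linarith

/-- The CHSH combination of correlations `F(α,β) = cos α cos β + ξ sin α sin β`
exceeds 2 for any `ξ > 0`: choosing `α = 0`, `α' = π/2`, `cos β = −cos β' = η`,
`sin β = sin β' = √(1−η²)` (i.e. `β = arccos η`, `β' = arccos (−η)`), the CHSH
expression equals `2(η + ξ√(1−η²))`, which exceeds 2 for a suitable `η ∈ (0,1)`. -/
theorem chsh_violation_exists (ξ : ℝ) (hξ : 0 < ξ) :
    ∃ η : ℝ, 0 < η ∧ η < 1 ∧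
      (let F : ℝ → ℝ → ℝ := fun α β => Real.cos α * Real.cos β + ξ * Real.sin α * Real.sin β
       let β := Real.arccos η
       let β' := Real.arccos (-η)
       |F 0 β - F 0 β'| + |F (Real.pi / 2) β + F (Real.pi / 2) β'|
          = 2 * (η + ξ * Real.sqrt (1 - η ^ 2)) ∧
        2 < 2 * (η + ξ * Real.sqrt (1 - η ^ 2))) := by
  have hs : 1 < √(1 + ξ ^ 2) := one_lt_sqrt_one_add_sq hξ.ne'
  have hη₀ : 0 < (√(1 + ξ ^ 2))⁻¹ := by positivity
  have hη₁ : (√(1 + ξ ^ 2))⁻¹ < 1 := inv_lt_one_of_one_lt₀ hs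
  refine ⟨_, hη₀, hη₁, ?_, ?_⟩
  · rw [chsh_expression_arccos ξ (by linarith) hη₁.le, abs_of_pos hη₀, abs_of_pos hξ]
  · rw [inv_sqrt_add_mul_sqrt_one_sub_sq hξ.le]
    linarith
end

section
/- Let ψ ∈ H ⊗ H be antisymmetric (i.e., swapping the tensor factors sends ψ to −ψ) where H is a finite-dimensional complex Hilbert space. Then ψ is the antisymmetrization of a product state (ψ = (u⊗v − v⊗u)/√2 for some u, v ∈ H) if and only if, in the canonical antisymmetric decomposition ψ = Σᵢ cᵢ (e_{2i−1}⊗e_{2i} − e_{2i}⊗e_{2i−1})/√2 with orthonormal eᵢ, exactly one coefficient cᵢ is nonzero. -/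
/-!
Contracting the first tensor factor against a vector `a` sends `x ⊗ y` to `⟪a, x⟫ • y`. Applied to
`u ⊗ v - v ⊗ u` it only produces vectors of `span {u, v}`, whereas applied to
`∑ cᵢ (gᵢ ⊗ hᵢ - hᵢ ⊗ gᵢ)` with `g, h` jointly orthonormal it sends `gᵢ` to `cᵢ hᵢ` and `hᵢ` to
`-cᵢ gᵢ`. Two nonzero coefficients would therefore put four orthonormal vectors into a span of two
vectors. Conversely a single term `c (g ⊗ h - h ⊗ g)` is the antisymmetrization of `(c g) ⊗ h`.
-/

open scoped TensorProduct InnerProductSpace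

section

variable {𝕜 E : Type*} [RCLike 𝕜] [NormedAddCommGroup E] [InnerProductSpace 𝕜 E]

variable (𝕜) in
def innerContractLeft (a : E) : E ⊗[𝕜] E →ₗ[𝕜] E :=
  TensorProduct.lift ((LinearMap.lsmul 𝕜 E).comp (innerₛₗ 𝕜 a))

@[simp]
theorem innerContractLeft_tmul (a x y : E) :
    innerContractLeft 𝕜 a (x ⊗ₜ[𝕜] y) = ⟪a, x⟫_𝕜 • y := by
  simp [innerContractLeft]

variable (𝕜) in
def antisymmTmul (u v : E) : E ⊗[𝕜] E := u ⊗ₜ v - v ⊗ₜ u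

theorem antisymmTmul_swap (u v : E) : antisymmTmul 𝕜 v u = -antisymmTmul 𝕜 u v :=
  (neg_sub _ _).symm

theorem smul_antisymmTmul (a : 𝕜) (u v : E) :
    a • antisymmTmul 𝕜 u v = antisymmTmul 𝕜 (a • u) v := by
  simp only [antisymmTmul, smul_sub, TensorProduct.smul_tmul', TensorProduct.tmul_smul]

theorem innerContractLeft_antisymmTmul_mem_span (a u v : E) :
    innerContractLeft 𝕜 a (antisymmTmul 𝕜 u v) ∈ Submodule.span 𝕜 {u, v} := by
  rw [antisymmTmul, map_sub, innerContractLeft_tmul, innerContractLeft_tmul]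
  exact sub_mem (Submodule.smul_mem _ _ (Submodule.subset_span (by simp)))
    (Submodule.smul_mem _ _ (Submodule.subset_span (by simp)))

variable {ι : Type*} [Fintype ι] {g h : ι → E}

theorem Orthonormal.innerContractLeft_sum_smul_antisymmTmul_left
    (horth : Orthonormal 𝕜 (Sum.elim g h)) (c : ι → 𝕜) (i : ι) :
    innerContractLeft 𝕜 (g i) (∑ j, c j • antisymmTmul 𝕜 (g j) (h j)) = c i • h i := by
  classical
  have hinner := orthonormal_iff_ite.mp horth
  have hgg : ∀ j, ⟪g i, g j⟫_𝕜 = if i = j then 1 else 0 := fun j => by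
    simpa using hinner (.inl i) (.inl j)
  have hgh : ∀ j, ⟪g i, h j⟫_𝕜 = 0 := fun j => by
    simpa using hinner (.inl i) (.inr j)
  simp [antisymmTmul, hgg, hgh]

theorem Orthonormal.innerContractLeft_sum_smul_antisymmTmul_right
    (horth : Orthonormal 𝕜 (Sum.elim g h)) (c : ι → 𝕜) (i : ι) :
    innerContractLeft 𝕜 (h i) (∑ j, c j • antisymmTmul 𝕜 (g j) (h j)) = -(c i • g i) := by
  have hswap : Orthonormal 𝕜 (Sum.elim h g) := by
    simpa using horth.comp Sum.swap Sum.swap_leftInverse.injective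
  calc innerContractLeft 𝕜 (h i) (∑ j, c j • antisymmTmul 𝕜 (g j) (h j))
      = -innerContractLeft 𝕜 (h i) (∑ j, c j • antisymmTmul 𝕜 (h j) (g j)) := by
        simp only [antisymmTmul_swap (h _) (g _), smul_neg, Finset.sum_neg_distrib, map_neg]
    _ = -(c i • g i) := by rw [hswap.innerContractLeft_sum_smul_antisymmTmul_left]

theorem Orthonormal.mem_span_of_sum_smul_antisymmTmul_eq
    (horth : Orthonormal 𝕜 (Sum.elim g h)) {c : ι → 𝕜} {u v : E}
    (huv : ∑ j, c j • antisymmTmul 𝕜 (g j) (h j) = antisymmTmul 𝕜 u v) {i : ι} (hi : c i ≠ 0) :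
    g i ∈ Submodule.span 𝕜 {u, v} ∧ h i ∈ Submodule.span 𝕜 {u, v} := by
  have hg := innerContractLeft_antisymmTmul_mem_span (𝕜 := 𝕜) (h i) u v
  have hh := innerContractLeft_antisymmTmul_mem_span (𝕜 := 𝕜) (g i) u v
  rw [← huv, horth.innerContractLeft_sum_smul_antisymmTmul_right] at hg
  rw [← huv, horth.innerContractLeft_sum_smul_antisymmTmul_left] at hh
  exact ⟨(Submodule.smul_mem_iff _ hi).mp (neg_mem_iff.mp hg), (Submodule.smul_mem_iff _ hi).mp hh⟩

theorem Orthonormal.subsingleton_of_sum_smul_antisymmTmul_eq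
    (horth : Orthonormal 𝕜 (Sum.elim g h)) {c : ι → 𝕜} {u v : E}
    (huv : ∑ j, c j • antisymmTmul 𝕜 (g j) (h j) = antisymmTmul 𝕜 u v) :
    {i | c i ≠ 0}.Subsingleton := by
  classical
  intro i hi j hj
  by_contra hij
  obtain ⟨hgi, hhi⟩ := horth.mem_span_of_sum_smul_antisymmTmul_eq huv hi
  obtain ⟨hgj, hhj⟩ := horth.mem_span_of_sum_smul_antisymmTmul_eq huv hj
  let s : Finset (ι ⊕ ι) := {.inl i, .inr i, .inl j, .inr j}
  have hcard : s.card = 4 := by simp [s, hij]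
  have hspan : Set.range (fun k : s => Sum.elim g h k) ≤
      Submodule.span 𝕜 (({u, v} : Finset E) : Set E) := by
    rintro _ ⟨⟨k, hk⟩, rfl⟩
    simp only [s, Finset.mem_insert, Finset.mem_singleton] at hk
    push_cast
    rcases hk with rfl | rfl | rfl | rfl <;> assumption
  have hle := linearIndependent_le_span_aux' _
    (horth.linearIndependent.comp _ Subtype.val_injective) _ hspan
  simp only [Finset.coe_sort_coe, Fintype.card_coe, hcard] at hle
  have := Finset.card_le_two (a := u) (b := v)
  omega

theorem exists_antisymmTmul_eq_sum_smul_of_subsingleton {c : ι → 𝕜}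
    (hc : {i | c i ≠ 0}.Subsingleton) :
    ∃ u v, antisymmTmul 𝕜 u v = ∑ j, c j • antisymmTmul 𝕜 (g j) (h j) := by
  rcases hc.eq_empty_or_singleton with hempty | ⟨i, hi⟩
  · have hzero : ∀ j, c j = 0 := by simpa [Set.eq_empty_iff_forall_notMem] using hempty
    exact ⟨0, 0, by simp [antisymmTmul, hzero]⟩
  · refine ⟨c i • g i, h i, ?_⟩
    rw [Finset.sum_eq_single i, smul_antisymmTmul]
    · intro j _ hj
      by_contra hcj
      exact hj (hi.subset (left_ne_zero_of_smul hcj))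
    · simp

theorem Orthonormal.exists_antisymmTmul_eq_sum_smul_iff
    (horth : Orthonormal 𝕜 (Sum.elim g h)) (c : ι → 𝕜) :
    (∃ u v, antisymmTmul 𝕜 u v = ∑ j, c j • antisymmTmul 𝕜 (g j) (h j)) ↔
      {i | c i ≠ 0}.Subsingleton :=
  ⟨fun ⟨_, _, huv⟩ => horth.subsingleton_of_sum_smul_antisymmTmul_eq huv.symm,
    exists_antisymmTmul_eq_sum_smul_of_subsingleton⟩

end

theorem antisymmetrized_product_iff_one_coeff_general
    (H : Type*) [NormedAddCommGroup H] [InnerProductSpace ℂ H]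
    (ψ : H ⊗[ℂ] H) (hψ : ψ ≠ 0)
    (n : ℕ) (g h : Fin n → H) (horth : Orthonormal ℂ (Sum.elim g h))
    (c : Fin n → ℂ)
    (hdecomp : ψ = ∑ i, c i • ((Real.sqrt 2 : ℂ)⁻¹ •
        (g i ⊗ₜ[ℂ] h i - h i ⊗ₜ[ℂ] g i))) :
    (∃ u v : H, ψ = (Real.sqrt 2 : ℂ)⁻¹ • (u ⊗ₜ[ℂ] v - v ⊗ₜ[ℂ] u)) ↔
      (∃! i, c i ≠ 0) := by
  set s : ℂ := (Real.sqrt 2 : ℂ)⁻¹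
  have hs : s ≠ 0 := by simp [s]
  have hψs : ψ = s • ∑ i, c i • antisymmTmul ℂ (g i) (h i) := by
    simp only [hdecomp, antisymmTmul, Finset.smul_sum, smul_comm s]
  obtain ⟨i, hi⟩ : ∃ i, c i ≠ 0 := by
    by_contra! hc
    exact hψ (by simp [hψs, hc])
  calc (∃ u v : H, ψ = s • (u ⊗ₜ[ℂ] v - v ⊗ₜ[ℂ] u))
      ↔ ∃ u v, antisymmTmul ℂ u v = ∑ j, c j • antisymmTmul ℂ (g j) (h j) := by
        simp only [hψs, (smul_right_injective _ hs).eq_iff, antisymmTmul, eq_comm]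
    _ ↔ {i | c i ≠ 0}.Subsingleton := horth.exists_antisymmTmul_eq_sum_smul_iff c
    _ ↔ ∃! i, c i ≠ 0 :=
        ⟨fun hsub => ⟨i, hi, fun _ hj => hsub hj hi⟩,
          fun ⟨_, _, huniq⟩ _ hj _ hk => (huniq _ hj).trans (huniq _ hk).symm⟩

/-- GMW-entanglement criterion: a nonzero antisymmetric vector `ψ ∈ H ⊗ H`, written
in a canonical antisymmetric decomposition `ψ = Σᵢ cᵢ (gᵢ⊗hᵢ − hᵢ⊗gᵢ)/√2` with
`g₁, h₁, ..., gₙ, hₙ` jointly orthonormal, is the antisymmetrization of a product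
state (`ψ = (u⊗v − v⊗u)/√2`) iff exactly one coefficient `cᵢ` is nonzero. -/
theorem antisymmetrized_product_iff_one_coeff
    (H : Type*) [NormedAddCommGroup H] [InnerProductSpace ℂ H] [FiniteDimensional ℂ H]
    (ψ : H ⊗[ℂ] H) (hψ : ψ ≠ 0) (hanti : TensorProduct.comm ℂ H H ψ = -ψ)
    (n : ℕ) (g h : Fin n → H) (horth : Orthonormal ℂ (Sum.elim g h))
    (c : Fin n → ℂ)
    (hdecomp : ψ = ∑ i, c i • ((Real.sqrt 2 : ℂ)⁻¹ •
        (g i ⊗ₜ[ℂ] h i - h i ⊗ₜ[ℂ] g i))) :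
    (∃ u v : H, ψ = (Real.sqrt 2 : ℂ)⁻¹ • (u ⊗ₜ[ℂ] v - v ⊗ₜ[ℂ] u)) ↔
      (∃! i, c i ≠ 0) :=
  antisymmetrized_product_iff_one_coeff_general H ψ hψ n g h horth c hdecomp
end

section
/- The state Ψ = (1/2)(L⊗R + R⊗L)⊗(↑⊗↓ − ↓⊗↑), regarded as a vector in (H_space ⊗ H_spin)⊗(H_space ⊗ H_spin) via the natural reordering isomorphism, equals (1/√2)((L,↑)∧(R,↓) − (L,↓)∧(R,↑)), where (x,s) denotes x⊗s ∈ H_space⊗H_spin and u∧v := (u⊗v − v⊗u)/√2; moreover Ψ is not expressible as (u⊗v − v⊗u)/√2 for any u, v ∈ H_space⊗H_spin, provided L, R are orthonormal in H_space and ↑, ↓ are orthonormal in H_spin. -/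
open scoped ComplexInnerProductSpace TensorProduct

noncomputable def prodFun {E F : Type*} [NormedAddCommGroup E] [InnerProductSpace ℂ E]
    [NormedAddCommGroup F] [InnerProductSpace ℂ F] (x : E) (s : F) :
    E ⊗[ℂ] F →ₗ[ℂ] ℂ :=
  (LinearMap.mul' ℂ ℂ).comp
    (TensorProduct.map ((innerSL ℂ x).toLinearMap) ((innerSL ℂ s).toLinearMap))

lemma prodFun_tmul {E F : Type*} [NormedAddCommGroup E] [InnerProductSpace ℂ E]
    [NormedAddCommGroup F] [InnerProductSpace ℂ F] (x : E) (s : F) (a : E) (b : F) :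
    prodFun x s (a ⊗ₜ[ℂ] b) = ⟪x, a⟫ * ⟪s, b⟫ := by
  simp [prodFun]

noncomputable def pairFun {H : Type*} [AddCommGroup H] [Module ℂ H]
    (f g : H →ₗ[ℂ] ℂ) : H ⊗[ℂ] H →ₗ[ℂ] ℂ :=
  (LinearMap.mul' ℂ ℂ).comp (TensorProduct.map f g)

lemma pairFun_tmul {H : Type*} [AddCommGroup H] [Module ℂ H]
    (f g : H →ₗ[ℂ] ℂ) (u v : H) : pairFun f g (u ⊗ₜ[ℂ] v) = f u * g v := by
  simp [pairFun]

lemma plucker_contra (c u1 u2 u3 u4 v1 v2 v3 v4 : ℂ)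
    (h12 : c * (u1 * v2 - v1 * u2) = 0) (h34 : c * (u3 * v4 - v3 * u4) = 0)
    (h13 : c * (u1 * v3 - v1 * u3) = 0) (h24 : c * (u2 * v4 - v2 * u4) = 0)
    (h14 : c * (u1 * v4 - v1 * u4) = 1 / 2)
    (h23 : c * (u2 * v3 - v2 * u3) = -(1 / 2)) : False := by
  have key : (c * (u1 * v4 - v1 * u4)) * (c * (u2 * v3 - v2 * u3))
      = (c * (u1 * v3 - v1 * u3)) * (c * (u2 * v4 - v2 * u4))
        - (c * (u1 * v2 - v1 * u2)) * (c * (u3 * v4 - v3 * u4)) := by ring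
  rw [h12, h34, h13, h24, h14, h23] at key
  norm_num at key
/-- The EPRB state `Ψ = (1/2)(L⊗R + R⊗L)⊗(↑⊗↓ − ↓⊗↑)`, reordered into
`(H_space ⊗ H_spin)⊗(H_space ⊗ H_spin)`, equals
`(1/√2)((L,↑)∧(R,↓) − (L,↓)∧(R,↑))` where `u∧v := (u⊗v − v⊗u)/√2`; moreover it is
not the antisymmetrization `(u⊗v − v⊗u)/√2` of any product state. -/
theorem EPRB_state_is_GMW_entangled
    (Hspace Hspin : Type*)
    [NormedAddCommGroup Hspace] [InnerProductSpace ℂ Hspace]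
    [NormedAddCommGroup Hspin] [InnerProductSpace ℂ Hspin]
    (L R : Hspace) (hL : ⟪L, L⟫ = 1) (hR : ⟪R, R⟫ = 1) (hLR : ⟪L, R⟫ = 0)
    (up dn : Hspin) (hup : ⟪up, up⟫ = 1) (hdn : ⟪dn, dn⟫ = 1) (hud : ⟪up, dn⟫ = 0) :
    let wedge : Hspace ⊗[ℂ] Hspin → Hspace ⊗[ℂ] Hspin →
        (Hspace ⊗[ℂ] Hspin) ⊗[ℂ] (Hspace ⊗[ℂ] Hspin) :=
      fun u v => (Real.sqrt 2 : ℂ)⁻¹ • (u ⊗ₜ[ℂ] v - v ⊗ₜ[ℂ] u)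
    let Ψ : (Hspace ⊗[ℂ] Hspin) ⊗[ℂ] (Hspace ⊗[ℂ] Hspin) :=
      TensorProduct.tensorTensorTensorComm ℂ Hspace Hspace Hspin Hspin
        ((1 / 2 : ℂ) • ((L ⊗ₜ[ℂ] R + R ⊗ₜ[ℂ] L) ⊗ₜ[ℂ] (up ⊗ₜ[ℂ] dn - dn ⊗ₜ[ℂ] up)))
    Ψ = (Real.sqrt 2 : ℂ)⁻¹ •
        (wedge (L ⊗ₜ[ℂ] up) (R ⊗ₜ[ℂ] dn) - wedge (L ⊗ₜ[ℂ] dn) (R ⊗ₜ[ℂ] up)) ∧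
    ¬ ∃ u v : Hspace ⊗[ℂ] Hspin, Ψ = wedge u v := by
  intro wedge Ψ
  have hdu : ⟪dn, up⟫ = 0 := by rw [← inner_conj_symm, hud]; simp
  have hRL : ⟪R, L⟫ = 0 := by rw [← inner_conj_symm, hLR]; simp
  have hc : ((Real.sqrt 2 : ℂ))⁻¹ * ((Real.sqrt 2 : ℂ))⁻¹ = 1 / 2 := by
    rw [← mul_inv, ← Complex.ofReal_mul, Real.mul_self_sqrt (by norm_num)]
    norm_num
  have hΨ : Ψ = ((1:ℂ)/2) •
      ((L ⊗ₜ[ℂ] up) ⊗ₜ[ℂ] (R ⊗ₜ[ℂ] dn) - (L ⊗ₜ[ℂ] dn) ⊗ₜ[ℂ] (R ⊗ₜ[ℂ] up)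
        + (R ⊗ₜ[ℂ] up) ⊗ₜ[ℂ] (L ⊗ₜ[ℂ] dn) - (R ⊗ₜ[ℂ] dn) ⊗ₜ[ℂ] (L ⊗ₜ[ℂ] up)) := by
    simp only [Ψ, map_smul, TensorProduct.add_tmul, TensorProduct.tmul_sub, map_add, map_sub,
      TensorProduct.tensorTensorTensorComm_tmul]
    module
  constructor
  · rw [hΨ]
    simp only [wedge, smul_sub, smul_smul, hc]
    module
  · rintro ⟨u, v, h⟩
    rw [hΨ] at h
    simp only [wedge] at h
    have h12 := congrArg (pairFun (prodFun L up) (prodFun L dn)) h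
    simp only [map_smul, map_sub, map_add, pairFun_tmul, prodFun_tmul, hL, hR, hLR, hRL,
      hup, hdn, hud, hdu, smul_eq_mul, mul_one, mul_zero, one_mul, zero_mul,
      sub_zero, zero_sub, add_zero, zero_add, sub_self, neg_zero] at h12
    have h34 := congrArg (pairFun (prodFun R up) (prodFun R dn)) h
    simp only [map_smul, map_sub, map_add, pairFun_tmul, prodFun_tmul, hL, hR, hLR, hRL,
      hup, hdn, hud, hdu, smul_eq_mul, mul_one, mul_zero, one_mul, zero_mul,
      sub_zero, zero_sub, add_zero, zero_add, sub_self, neg_zero] at h34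
    have h13 := congrArg (pairFun (prodFun L up) (prodFun R up)) h
    simp only [map_smul, map_sub, map_add, pairFun_tmul, prodFun_tmul, hL, hR, hLR, hRL,
      hup, hdn, hud, hdu, smul_eq_mul, mul_one, mul_zero, one_mul, zero_mul,
      sub_zero, zero_sub, add_zero, zero_add, sub_self, neg_zero] at h13
    have h24 := congrArg (pairFun (prodFun L dn) (prodFun R dn)) h
    simp only [map_smul, map_sub, map_add, pairFun_tmul, prodFun_tmul, hL, hR, hLR, hRL,
      hup, hdn, hud, hdu, smul_eq_mul, mul_one, mul_zero, one_mul, zero_mul,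
      sub_zero, zero_sub, add_zero, zero_add, sub_self, neg_zero] at h24
    have h14 := congrArg (pairFun (prodFun L up) (prodFun R dn)) h
    simp only [map_smul, map_sub, map_add, pairFun_tmul, prodFun_tmul, hL, hR, hLR, hRL,
      hup, hdn, hud, hdu, smul_eq_mul, mul_one, mul_zero, one_mul, zero_mul,
      sub_zero, zero_sub, add_zero, zero_add, sub_self, neg_zero] at h14
    have h23 := congrArg (pairFun (prodFun L dn) (prodFun R up)) h
    simp only [map_smul, map_sub, map_add, pairFun_tmul, prodFun_tmul, hL, hR, hLR, hRL,
      hup, hdn, hud, hdu, smul_eq_mul, mul_one, mul_zero, one_mul, zero_mul,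
      sub_zero, zero_sub, add_zero, zero_add, sub_self, neg_zero] at h23
    exact plucker_contra ((Real.sqrt 2 : ℂ))⁻¹
      ((prodFun L up) u) ((prodFun L dn) u) ((prodFun R up) u) ((prodFun R dn) u)
      ((prodFun L up) v) ((prodFun L dn) v) ((prodFun R up) v) ((prodFun R dn) v)
      h12.symm h34.symm h13.symm h24.symm h14.symm (by linear_combination -h23)
end

section
/- Let H_space have orthonormal vectors L, R and H_spin = ℂ². The linear map sending (L⊗s)∧(R⊗t) ↦ s⊗t (for s, t ∈ H_spin), restricted to the 4-dimensional subspace of antisymmetric vectors spanned by {(L⊗s)∧(R⊗t) : s, t ∈ {↑, ↓}}, is a well-defined unitary isomorphism onto ℂ²⊗ℂ², and it sends the fermionic EPRB state (1/√2)((L,↑)∧(R,↓) − (L,↓)∧(R,↑)) to the singlet state (1/√2)(↑⊗↓ − ↓⊗↑). -/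
/-! The four vectors `(L⊗eᵢ)∧(R⊗eⱼ)` are orthonormal: the inner product of two wedges is the
Gram determinant `⟪a, c⟫⟪b, d⟫ - ⟪a, d⟫⟪b, c⟫`, whose cross term vanishes because `L ⟂ R`.
So they form an orthonormal basis of their span `W`, and the coordinate map of this basis is
a unitary `W ≃ ℂ²⊗ℂ²` sending `(L⊗eᵢ)∧(R⊗eⱼ)` to `eᵢ⊗eⱼ`; the EPRB state goes to the singlet
by linearity. -/

open scoped ComplexInnerProductSpace

noncomputable section

/-- Tensor product of a spatial vector and a spin vector. -/
def tensSS {m : ℕ} (x : EuclideanSpace ℂ (Fin m)) (y : EuclideanSpace ℂ (Fin 2)) :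
    EuclideanSpace ℂ (Fin m × Fin 2) :=
  (WithLp.equiv 2 _).symm fun p => x p.1 * y p.2

/-- Tensor product of two single-particle vectors. -/
def tensBig {m : ℕ} (x y : EuclideanSpace ℂ (Fin m × Fin 2)) :
    EuclideanSpace ℂ ((Fin m × Fin 2) × (Fin m × Fin 2)) :=
  (WithLp.equiv 2 _).symm fun p => x p.1 * y p.2

/-- The wedge `u ∧ v := (u⊗v − v⊗u)/√2` of two single-particle vectors. -/
def wedgeBig {m : ℕ} (x y : EuclideanSpace ℂ (Fin m × Fin 2)) :
    EuclideanSpace ℂ ((Fin m × Fin 2) × (Fin m × Fin 2)) :=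
  (Real.sqrt 2 : ℂ)⁻¹ • (tensBig x y - tensBig y x)

/-- Tensor product of two spin vectors, an element of `ℂ² ⊗ ℂ²`. -/
def tensSpin (x y : EuclideanSpace ℂ (Fin 2)) : EuclideanSpace ℂ (Fin 2 × Fin 2) :=
  (WithLp.equiv 2 _).symm fun p => x p.1 * y p.2

section

variable {𝕜 : Type*} [RCLike 𝕜]

theorem EuclideanSpace.inner_tensor {ι κ : Type*} [Fintype ι] [Fintype κ]
    (a c : EuclideanSpace 𝕜 ι) (b d : EuclideanSpace 𝕜 κ) :
    inner 𝕜 ((WithLp.equiv 2 _).symm fun p : ι × κ => a p.1 * b p.2)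
        ((WithLp.equiv 2 _).symm fun p : ι × κ => c p.1 * d p.2) = inner 𝕜 a c * inner 𝕜 b d := by
  simp only [PiLp.inner_apply, RCLike.inner_apply, WithLp.equiv_symm_apply, map_mul,
    Finset.sum_mul_sum, Fintype.sum_prod_type]
  exact Finset.sum_congr rfl fun _ _ => Finset.sum_congr rfl fun _ _ => by ring

variable {E : Type*} [NormedAddCommGroup E] [InnerProductSpace 𝕜 E]
  {ι : Type*} [Fintype ι] {v : ι → E}

def Orthonormal.basisSpan (hv : Orthonormal 𝕜 v) :
    OrthonormalBasis ι 𝕜 (Submodule.span 𝕜 (Set.range v)) :=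
  (Module.Basis.span hv.linearIndependent).toOrthonormalBasis <| by
    rw [funext (Module.Basis.span_apply hv.linearIndependent)]
    exact orthonormal_span hv

theorem Orthonormal.coe_basisSpan_apply (hv : Orthonormal 𝕜 v) (i : ι) :
    (hv.basisSpan i : E) = v i := by
  rw [Orthonormal.basisSpan, Module.Basis.coe_toOrthonormalBasis, Module.Basis.coe_span_apply]

end

theorem inner_tensBig {m : ℕ} (a b c d : EuclideanSpace ℂ (Fin m × Fin 2)) :
    ⟪tensBig a b, tensBig c d⟫ = ⟪a, c⟫ * ⟪b, d⟫ :=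
  EuclideanSpace.inner_tensor a c b d

theorem inner_tensSS {m : ℕ} (a c : EuclideanSpace ℂ (Fin m)) (b d : EuclideanSpace ℂ (Fin 2)) :
    ⟪tensSS a b, tensSS c d⟫ = ⟪a, c⟫ * ⟪b, d⟫ :=
  EuclideanSpace.inner_tensor a c b d

theorem inner_wedgeBig {m : ℕ} (a b c d : EuclideanSpace ℂ (Fin m × Fin 2)) :
    ⟪wedgeBig a b, wedgeBig c d⟫ = ⟪a, c⟫ * ⟪b, d⟫ - ⟪a, d⟫ * ⟪b, c⟫ := by
  have hnorm : starRingEnd ℂ (Real.sqrt 2 : ℂ)⁻¹ * (Real.sqrt 2 : ℂ)⁻¹ = 2⁻¹ := by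
    rw [map_inv₀, Complex.conj_ofReal, ← mul_inv, ← Complex.ofReal_mul,
      Real.mul_self_sqrt zero_le_two, Complex.ofReal_ofNat]
  simp only [wedgeBig, inner_smul_left, inner_smul_right, inner_sub_left, inner_sub_right,
    inner_tensBig]
  linear_combination 2 * (⟪a, c⟫ * ⟪b, d⟫ - ⟪a, d⟫ * ⟪b, c⟫) * hnorm

theorem tensSpin_single (i j : Fin 2) :
    tensSpin (EuclideanSpace.single i 1) (EuclideanSpace.single j 1)
      = EuclideanSpace.single ((i, j) : Fin 2 × Fin 2) (1 : ℂ) := by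
  ext ⟨k, l⟩
  simp only [tensSpin, WithLp.equiv_symm_apply, PiLp.single_apply, Prod.ext_iff,
    ite_zero_mul_ite_zero, mul_one]

theorem orthonormal_wedgeBig_tensSS {m : ℕ} {ι : Type*} {L R : EuclideanSpace ℂ (Fin m)}
    (hL : ⟪L, L⟫ = 1) (hR : ⟪R, R⟫ = 1) (hLR : ⟪L, R⟫ = 0) {e : ι → EuclideanSpace ℂ (Fin 2)}
    (he : Orthonormal ℂ e) :
    Orthonormal ℂ fun p : ι × ι => wedgeBig (tensSS L (e p.1)) (tensSS R (e p.2)) := by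
  classical
  rw [orthonormal_iff_ite] at he ⊢
  rintro ⟨i, j⟩ ⟨k, l⟩
  simp only [inner_wedgeBig, inner_tensSS, hL, hR, hLR, inner_eq_zero_symm.mp hLR, he,
    Prod.ext_iff]
  split_ifs <;> simp_all

/-- The linear map `(L⊗s)∧(R⊗t) ↦ s⊗t`, restricted to the 4-dimensional subspace
spanned by `{(L⊗s)∧(R⊗t) : s, t ∈ {↑, ↓}}`, is a well-defined unitary isomorphism
onto `ℂ²⊗ℂ²`, and it sends the fermionic EPRB state
`(1/√2)((L,↑)∧(R,↓) − (L,↓)∧(R,↑))` to the singlet `(1/√2)(↑⊗↓ − ↓⊗↑)`. -/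
theorem fermionic_EPRB_unitarily_equivalent_to_singlet (m : ℕ)
    (L R : EuclideanSpace ℂ (Fin m))
    (hL : ⟪L, L⟫ = 1) (hR : ⟪R, R⟫ = 1) (hLR : ⟪L, R⟫ = 0) :
    let s : Fin 2 → EuclideanSpace ℂ (Fin 2) := fun i => EuclideanSpace.single i 1
    let W : Submodule ℂ (EuclideanSpace ℂ ((Fin m × Fin 2) × (Fin m × Fin 2))) :=
      Submodule.span ℂ
        (Set.range fun p : Fin 2 × Fin 2 => wedgeBig (tensSS L (s p.1)) (tensSS R (s p.2)))
    Module.finrank ℂ W = 4 ∧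
    ∃ T : W ≃ₗᵢ[ℂ] EuclideanSpace ℂ (Fin 2 × Fin 2),
      (∀ (i j : Fin 2) (x : W),
        (x : EuclideanSpace ℂ ((Fin m × Fin 2) × (Fin m × Fin 2)))
            = wedgeBig (tensSS L (s i)) (tensSS R (s j)) →
          T x = tensSpin (s i) (s j)) ∧
      (∀ x : W,
        (x : EuclideanSpace ℂ ((Fin m × Fin 2) × (Fin m × Fin 2)))
            = (Real.sqrt 2 : ℂ)⁻¹ •
              (wedgeBig (tensSS L (s 0)) (tensSS R (s 1))
                - wedgeBig (tensSS L (s 1)) (tensSS R (s 0))) →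
          T x = (Real.sqrt 2 : ℂ)⁻¹ • (tensSpin (s 0) (s 1) - tensSpin (s 1) (s 0))) := by
  intro s W
  have hw := orthonormal_wedgeBig_tensSS hL hR hLR EuclideanSpace.orthonormal_single
  refine ⟨by simpa using finrank_span_eq_card hw.linearIndependent, hw.basisSpan.repr, ?_, ?_⟩
  · intro i j x hx
    have hx' : x = hw.basisSpan (i, j) :=
      Subtype.ext (hx.trans (hw.coe_basisSpan_apply (i, j)).symm)
    rw [hx', OrthonormalBasis.repr_self, tensSpin_single]
  · intro x hx
    have hx' : x = (Real.sqrt 2 : ℂ)⁻¹ • (hw.basisSpan (0, 1) - hw.basisSpan (1, 0)) :=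
      Subtype.ext <| by simpa only [Submodule.coe_smul, Submodule.coe_sub, hw.coe_basisSpan_apply]
    rw [hx', map_smul, map_sub, OrthonormalBasis.repr_self, OrthonormalBasis.repr_self,
      tensSpin_single, tensSpin_single]

end
end

section
/- For any nonzero antisymmetric vector ψ in H ⊗ H (H a finite-dimensional complex Hilbert space), there exist orthogonal projections E₁, E₂ on H with E₁E₂ = 0 and (E₁⊗E₂ + E₂⊗E₁)ψ = ψ. -/
/-!
The form `(x, y) ↦ ⟪x ⊗ y, ψ⟫` is antisymmetric, and it is represented by the conjugate-linear
operator `F = leftContraction ψ`, which is skew: `⟪y, F x⟫ = -⟪x, F y⟫`. Then `F ∘ F` is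
symmetric, so it has an eigenvector `u`; the plane spanned by `u` and `F u` is `F`-invariant, both
lines in it are isotropic, and by skewness its orthogonal complement is `F`-invariant too.
Induction on the dimension splits the space orthogonally as `V ⊕ Vᗮ` with `V` and `Vᗮ` both
isotropic (this is the canonical form `ψ = ∑ cᵢ e₂ᵢ₋₁ ∧ e₂ᵢ`). Hence `ψ` has no component in
`V ⊗ V` or `Vᗮ ⊗ Vᗮ`, and the projections onto `V` and `Vᗮ` individuate it.
-/

open scoped TensorProduct InnerProductSpace

section SkewOperator

variable {𝕜 E : Type*} [RCLike 𝕜] [NormedAddCommGroup E] [InnerProductSpace 𝕜 E]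
  {F : E →ₗ⋆[𝕜] E}

def IsSkew (F : E →ₗ⋆[𝕜] E) : Prop :=
  ∀ x y, ⟪y, F x⟫_𝕜 = -⟪x, F y⟫_𝕜

def IsIsotropic (F : E →ₗ⋆[𝕜] E) (V : Submodule 𝕜 E) : Prop :=
  ∀ x ∈ V, ∀ y ∈ V, ⟪y, F x⟫_𝕜 = 0

lemma isIsotropic_bot : IsIsotropic F ⊥ := by
  intro x hx y _
  rw [(Submodule.mem_bot 𝕜).mp hx, map_zero, inner_zero_right]

lemma mapsTo_span_singleton_sup_span_singleton {u : E} {μ : 𝕜} (hu : F (F u) = μ • u) :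
    ∀ x ∈ (𝕜 ∙ u) ⊔ (𝕜 ∙ F u), F x ∈ (𝕜 ∙ u) ⊔ (𝕜 ∙ F u) := by
  intro x hx
  obtain ⟨_, ha, _, hb, rfl⟩ := Submodule.mem_sup.mp hx
  obtain ⟨a, rfl⟩ := Submodule.mem_span_singleton.mp ha
  obtain ⟨b, rfl⟩ := Submodule.mem_span_singleton.mp hb
  rw [map_add, map_smulₛₗ, map_smulₛₗ, hu, smul_smul, add_comm]
  exact Submodule.add_mem_sup (Submodule.smul_mem _ _ (Submodule.mem_span_singleton_self u))
    (Submodule.smul_mem _ _ (Submodule.mem_span_singleton_self _))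

namespace IsSkew

lemma inner_self_apply (hF : IsSkew F) (x : E) : ⟪x, F x⟫_𝕜 = 0 :=
  self_eq_neg.mp (hF x x)

lemma isIsotropic_span_singleton (hF : IsSkew F) (v : E) : IsIsotropic F (𝕜 ∙ v) := by
  rintro _ hx _ hy
  obtain ⟨a, rfl⟩ := Submodule.mem_span_singleton.mp hx
  obtain ⟨b, rfl⟩ := Submodule.mem_span_singleton.mp hy
  simp [inner_smul_left, inner_smul_right, hF.inner_self_apply]

lemma isIsotropic_sup (hF : IsSkew F) {V₁ V₂ : Submodule 𝕜 E}
    (h₁ : IsIsotropic F V₁) (h₂ : IsIsotropic F V₂)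
    (h₁₂ : ∀ x ∈ V₁, ∀ y ∈ V₂, ⟪y, F x⟫_𝕜 = 0) : IsIsotropic F (V₁ ⊔ V₂) := by
  intro x hx y hy
  obtain ⟨x₁, hx₁, x₂, hx₂, rfl⟩ := Submodule.mem_sup.mp hx
  obtain ⟨y₁, hy₁, y₂, hy₂, rfl⟩ := Submodule.mem_sup.mp hy
  simp only [map_add, inner_add_left, inner_add_right, h₁ x₁ hx₁ y₁ hy₁, h₂ x₂ hx₂ y₂ hy₂,
    h₁₂ x₁ hx₁ y₂ hy₂, hF x₂ y₁, h₁₂ y₁ hy₁ x₂ hx₂]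
  simp

lemma isSymmetric_comp_self (hF : IsSkew F) : (F.comp F).IsSymmetric := by
  intro x y
  rw [LinearMap.comp_apply, LinearMap.comp_apply, ← inner_conj_symm, hF, hF (F y) x, map_neg,
    inner_conj_symm]

lemma mapsTo_orthogonal (hF : IsSkew F) {S : Submodule 𝕜 E} (hS : ∀ x ∈ S, F x ∈ S) :
    ∀ x ∈ Sᗮ, F x ∈ Sᗮ := by
  intro x hx
  rw [Submodule.mem_orthogonal]
  intro y hy
  rw [hF, Submodule.inner_left_of_mem_orthogonal (hS y hy) hx, neg_zero]

lemma exists_ne_zero_apply_apply_eq_smul [FiniteDimensional 𝕜 E] (hF : IsSkew F)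
    {S : Submodule 𝕜 E} (hS : ∀ x ∈ S, F x ∈ S) (hS₀ : S ≠ ⊥) :
    ∃ u ∈ S, u ≠ 0 ∧ ∃ μ : 𝕜, F (F u) = μ • u := by
  have : Nontrivial S := Submodule.nontrivial_iff_ne_bot.mpr hS₀
  have hT := hF.isSymmetric_comp_self.restrict_invariant fun x hx => hS _ (hS x hx)
  obtain ⟨⟨u, hu⟩, hv⟩ := hT.hasEigenvalue_iSup_of_finiteDimensional.exists_hasEigenvector
  exact ⟨u, hu, fun h => hv.2 (by simp [h]), _, congrArg Subtype.val hv.apply_eq_smul⟩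

theorem exists_isIsotropic_split [FiniteDimensional 𝕜 E] (hF : IsSkew F)
    (S : Submodule 𝕜 E) (hS : ∀ x ∈ S, F x ∈ S) :
    ∃ V₁ V₂ : Submodule 𝕜 E, V₁ ⟂ V₂ ∧ V₁ ⊔ V₂ = S ∧ IsIsotropic F V₁ ∧ IsIsotropic F V₂ := by
  induction hn : Module.finrank 𝕜 S using Nat.strong_induction_on generalizing S with
  | _ n ih =>
  rcases eq_or_ne S ⊥ with rfl | hS₀
  · exact ⟨⊥, ⊥, Submodule.isOrtho_bot_left, sup_bot_eq ⊥, isIsotropic_bot, isIsotropic_bot⟩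
  obtain ⟨u, huS, hu₀, μ, hμ⟩ := hF.exists_ne_zero_apply_apply_eq_smul hS hS₀
  set U := (𝕜 ∙ u) ⊔ (𝕜 ∙ F u)
  have huU : u ∈ U := Submodule.mem_sup_left (Submodule.mem_span_singleton_self u)
  have hUS : U ≤ S := sup_le ((Submodule.span_singleton_le_iff_mem _ _).mpr huS)
    ((Submodule.span_singleton_le_iff_mem _ _).mpr (hS u huS))
  have hU : ∀ x ∈ U, F x ∈ U := mapsTo_span_singleton_sup_span_singleton hμ
  set W := Uᗮ ⊓ S
  have hW : ∀ x ∈ W, F x ∈ W := fun x hx => ⟨hF.mapsTo_orthogonal hU x hx.1, hS x hx.2⟩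
  have hWn : Module.finrank 𝕜 W < n := by
    have hU₀ : 1 ≤ Module.finrank 𝕜 U :=
      Submodule.one_le_finrank_iff.mpr ((Submodule.ne_bot_iff U).mpr ⟨u, huU, hu₀⟩)
    have : Module.finrank 𝕜 U + Module.finrank 𝕜 W = Module.finrank 𝕜 S :=
      Submodule.finrank_add_inf_finrank_orthogonal hUS
    omega
  obtain ⟨V₁, V₂, hV₁₂, hV, hV₁, hV₂⟩ := ih _ hWn W hW rfl
  have hUW : U ⟂ W := (Submodule.isOrtho_orthogonal_right U).mono_right inf_le_left
  have hUV₁ : U ⟂ V₁ := hUW.mono_right (hV ▸ le_sup_left)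
  have hUV₂ : U ⟂ V₂ := hUW.mono_right (hV ▸ le_sup_right)
  refine ⟨(𝕜 ∙ u) ⊔ V₁, (𝕜 ∙ F u) ⊔ V₂, ?_, ?_, ?_, ?_⟩
  · have huFu : (𝕜 ∙ u) ⟂ (𝕜 ∙ F u) := by
      simpa [Submodule.isOrtho_span] using hF.inner_self_apply u
    simp only [Submodule.isOrtho_sup_left, Submodule.isOrtho_sup_right]
    exact ⟨⟨huFu, hUV₁.symm.mono_right le_sup_right⟩, hUV₂.mono_left le_sup_left, hV₁₂⟩
  · rw [sup_sup_sup_comm, hV, Submodule.sup_orthogonal_inf_of_hasOrthogonalProjection hUS]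
  · refine hF.isIsotropic_sup (hF.isIsotropic_span_singleton u) hV₁ fun x hx y hy => ?_
    exact hUV₁.symm.inner_eq hy (hU x (Submodule.mem_sup_left hx))
  · refine hF.isIsotropic_sup (hF.isIsotropic_span_singleton (F u)) hV₂ fun x hx y hy => ?_
    exact hUV₂.symm.inner_eq hy (hU x (Submodule.mem_sup_right hx))

theorem exists_isIsotropic_and_orthogonal [FiniteDimensional 𝕜 E] (hF : IsSkew F) :
    ∃ V : Submodule 𝕜 E, IsIsotropic F V ∧ IsIsotropic F Vᗮ := by
  obtain ⟨V₁, V₂, hV₁₂, hV, hV₁, hV₂⟩ := hF.exists_isIsotropic_split ⊤ fun _ _ => trivial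
  have horth : V₁ᗮ = V₂ := by
    rw [← top_inf_eq V₁ᗮ, ← hV, sup_comm V₁ V₂, sup_inf_assoc_of_le V₁ hV₁₂.ge,
      Submodule.inf_orthogonal_eq_bot, sup_bot_eq]
  exact ⟨V₁, hV₁, horth ▸ hV₂⟩

end IsSkew

end SkewOperator

section TensorProduct

variable {𝕜 E G : Type*} [RCLike 𝕜] [NormedAddCommGroup E] [InnerProductSpace 𝕜 E]
  [NormedAddCommGroup G] [InnerProductSpace 𝕜 G]

noncomputable def leftContraction (ψ : E ⊗[𝕜] G) : E →ₗ⋆[𝕜] G where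
  toFun x := TensorProduct.lid 𝕜 G (LinearMap.rTensor G (innerₛₗ 𝕜 x) ψ)
  map_add' x y := by simp [LinearMap.rTensor_add]
  map_smul' c x := by simp [LinearMap.rTensor_smul]

lemma inner_leftContraction (ψ : E ⊗[𝕜] G) (x : E) (y : G) :
    ⟪y, leftContraction ψ x⟫_𝕜 = ⟪x ⊗ₜ y, ψ⟫_𝕜 := by
  induction ψ using TensorProduct.induction_on with
  | zero => simp [leftContraction]
  | tmul a b => simp [leftContraction, inner_smul_right]
  | add ψ₁ ψ₂ h₁ h₂ =>
    simp only [leftContraction, LinearMap.coe_mk, AddHom.coe_mk] at h₁ h₂ ⊢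
    rw [map_add, map_add, inner_add_right, inner_add_right, h₁, h₂]

lemma inner_tmul_eq_neg_swap_of_comm_eq_neg {ψ : E ⊗[𝕜] E}
    (hψ : TensorProduct.comm 𝕜 E E ψ = -ψ) (x y : E) :
    ⟪x ⊗ₜ y, ψ⟫_𝕜 = -⟪y ⊗ₜ x, ψ⟫_𝕜 :=
  calc ⟪x ⊗ₜ y, ψ⟫_𝕜 = ⟪TensorProduct.comm 𝕜 E E (y ⊗ₜ x), -TensorProduct.comm 𝕜 E E ψ⟫_𝕜 := by
        rw [hψ, neg_neg, TensorProduct.comm_tmul]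
    _ = -⟪y ⊗ₜ x, ψ⟫_𝕜 := by rw [inner_neg_right, TensorProduct.inner_comm_comm]

lemma isSkew_leftContraction_of_comm_eq_neg {ψ : E ⊗[𝕜] E}
    (hψ : TensorProduct.comm 𝕜 E E ψ = -ψ) : IsSkew (leftContraction ψ) := by
  intro x y
  simp only [inner_leftContraction, inner_tmul_eq_neg_swap_of_comm_eq_neg hψ x y]

lemma inner_tmul_map_of_isSymmetric {f : E →ₗ[𝕜] E} {g : G →ₗ[𝕜] G} (hf : f.IsSymmetric)
    (hg : g.IsSymmetric) (a : E) (b : G) (ψ : E ⊗[𝕜] G) :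
    ⟪a ⊗ₜ b, TensorProduct.map f g ψ⟫_𝕜 = ⟪f a ⊗ₜ g b, ψ⟫_𝕜 := by
  induction ψ using TensorProduct.induction_on with
  | zero => simp
  | tmul c d => simp [hf a c, hg b d]
  | add ψ₁ ψ₂ h₁ h₂ => rw [map_add, inner_add_right, inner_add_right, h₁, h₂]

lemma map_add_map_apply_eq_self {P Q : E →ₗ[𝕜] E} (hP : P.IsSymmetric) (hQ : Q.IsSymmetric)
    (hPQ : P + Q = LinearMap.id) {ψ : E ⊗[𝕜] E} (hψP : ∀ a b, ⟪P a ⊗ₜ P b, ψ⟫_𝕜 = 0)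
    (hψQ : ∀ a b, ⟪Q a ⊗ₜ Q b, ψ⟫_𝕜 = 0) :
    (TensorProduct.map P Q + TensorProduct.map Q P) ψ = ψ := by
  refine TensorProduct.ext_iff_inner_left.mpr fun a b => ?_
  have hsplit : ∀ x, x = P x + Q x := fun x => by
    rw [← LinearMap.add_apply, hPQ, LinearMap.id_apply]
  rw [LinearMap.add_apply, inner_add_right, inner_tmul_map_of_isSymmetric hP hQ,
    inner_tmul_map_of_isSymmetric hQ hP]
  conv_rhs => rw [hsplit a, hsplit b]
  rw [TensorProduct.add_tmul, TensorProduct.tmul_add, TensorProduct.tmul_add, inner_add_left,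
    inner_add_left, inner_add_left, hψP, hψQ]
  ring

end TensorProduct

theorem individuating_projectors_exist_general
    (H : Type*) [NormedAddCommGroup H] [InnerProductSpace ℂ H] [FiniteDimensional ℂ H]
    (ψ : H ⊗[ℂ] H)
    (hanti : TensorProduct.comm ℂ H H ψ = -ψ) :
    ∃ E₁ E₂ : H →ₗ[ℂ] H,
      E₁.IsSymmetric ∧ E₂.IsSymmetric ∧ E₁ ∘ₗ E₁ = E₁ ∧ E₂ ∘ₗ E₂ = E₂ ∧
      E₁ ∘ₗ E₂ = 0 ∧
      (TensorProduct.map E₁ E₂ + TensorProduct.map E₂ E₁) ψ = ψ := by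
  obtain ⟨V, hV, hV'⟩ :=
    (isSkew_leftContraction_of_comm_eq_neg hanti).exists_isIsotropic_and_orthogonal
  refine ⟨V.starProjection, Vᗮ.starProjection, V.starProjection_isSymmetric,
    Vᗮ.starProjection_isSymmetric,
    congrArg ContinuousLinearMap.toLinearMap V.isIdempotentElem_starProjection,
    congrArg ContinuousLinearMap.toLinearMap Vᗮ.isIdempotentElem_starProjection,
    congrArg ContinuousLinearMap.toLinearMap
      V.isOrtho_orthogonal_right.starProjection_comp_starProjection, ?_⟩
  refine map_add_map_apply_eq_self V.starProjection_isSymmetric Vᗮ.starProjection_isSymmetric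
    (LinearMap.ext V.starProjection_add_starProjection_orthogonal) (fun a b => ?_) fun a b => ?_
  · rw [← inner_leftContraction]
    exact hV _ (V.starProjection_apply_mem a) _ (V.starProjection_apply_mem b)
  · rw [← inner_leftContraction]
    exact hV' _ (Vᗮ.starProjection_apply_mem a) _ (Vᗮ.starProjection_apply_mem b)

/-- Existence of individuating projectors for any two-fermion state: for any nonzero
antisymmetric `ψ ∈ H ⊗ H` there are orthogonal projections `E₁, E₂` (symmetric
idempotents) with `E₁E₂ = 0` and `(E₁⊗E₂ + E₂⊗E₁)ψ = ψ`. -/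
theorem individuating_projectors_exist
    (H : Type*) [NormedAddCommGroup H] [InnerProductSpace ℂ H] [FiniteDimensional ℂ H]
    (ψ : H ⊗[ℂ] H) (hψ : ψ ≠ 0)
    (hanti : TensorProduct.comm ℂ H H ψ = -ψ) :
    ∃ E₁ E₂ : H →ₗ[ℂ] H,
      E₁.IsSymmetric ∧ E₂.IsSymmetric ∧ E₁ ∘ₗ E₁ = E₁ ∧ E₂ ∘ₗ E₂ = E₂ ∧
      E₁ ∘ₗ E₂ = 0 ∧
      (TensorProduct.map E₁ E₂ + TensorProduct.map E₂ E₁) ψ = ψ :=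
  individuating_projectors_exist_general H ψ hanti
end
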